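/- The comultiplication Δ(W) = W ⊗ W (matrix coproduct), counit ε(w^1)=1, ε(w^2)=0, and antipode S(w^1)=w̄^1, S(w^2)=−w^2 make the commutative *-algebra generated by w^1, w^2 with relation w^1 w̄^1 + w^2 w̄^2 = 1 into a Hopf algebra, and the map Δ_R sending (z^1,z^2,z^3,z^4) ↦ (z^1,z^2,z^3,z^4) ⊗-entrywise multiplied by diag(W,W) extends to a *-algebra homomorphism A(S^7_{θ'}) → A(S^7_{θ'}) ⊗ A(SU(2)) which is a right comodule-algebra structure (coassociative and counital). -/

import Mathlib

open scoped TensorProduct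

noncomputable section

/-- The deformation matrix λ'^{ij} of the sphere S^7_{θ'}: λ'^{12}=λ'^{34}=1 and
λ'^{13}=λ'^{14}=λ'^{23}=λ'^{24}=μ (indices 0-based), with λ'^{ji} = (λ'^{ij})⁻¹. -/
def lam7 (μ : ℂ) (i j : Fin 4) : ℂ :=
  if ((i : ℕ) < 2 ∧ (j : ℕ) < 2) ∨ (2 ≤ (i : ℕ) ∧ 2 ≤ (j : ℕ)) then 1
  else if (i : ℕ) < 2 then μ else μ⁻¹

variable {A : Type} [Ring A] [Algebra ℂ A] [StarRing A] [StarModule ℂ A]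

/-- The defining relations of A(S^7_{θ'}): commutation relations among the generators and
their adjoints, and the sphere relation Σ_i z^i z̄^i = 1. -/
def S7Rel (μ : ℂ) (z : Fin 4 → A) : Prop :=
  (∀ i j, z i * z j = lam7 μ i j • (z j * z i)) ∧
  (∀ i j, star (z i) * z j = lam7 μ j i • (z j * star (z i))) ∧
  (∀ i j, star (z i) * star (z j) = lam7 μ i j • (star (z j) * star (z i))) ∧
  (∑ i, z i * star (z i)) = 1

/-- α = 2(z^1 z̄^3 + z^2 z̄^4). -/
def elA (z : Fin 4 → A) : A := 2 * (z 0 * star (z 2) + z 1 * star (z 3))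

/-- β = 2(−z^1 z^4 + z^2 z^3). -/
def elB (z : Fin 4 → A) : A := 2 * (-(z 0 * z 3) + z 1 * z 2)

/-- x = z^1 z̄^1 + z^2 z̄^2 − z^3 z̄^3 − z^4 z̄^4. -/
def elX (z : Fin 4 → A) : A :=
  z 0 * star (z 0) + z 1 * star (z 1) - z 2 * star (z 2) - z 3 * star (z 3)

/-- |ψ_1⟩ = (z^1, −z̄^2, z^3, −z̄^4)^t. -/
def psi1 (z : Fin 4 → A) : Fin 4 → A := ![z 0, -star (z 1), z 2, -star (z 3)]

/-- |ψ_2⟩ = (z^2, z̄^1, z^4, z̄^3)^t. -/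
def psi2 (z : Fin 4 → A) : Fin 4 → A := ![z 1, star (z 0), z 3, star (z 2)]

/-- The projection p = |ψ_1⟩⟨ψ_1| + |ψ_2⟩⟨ψ_2| as a 4×4 matrix. -/
def projP (z : Fin 4 → A) : Matrix (Fin 4) (Fin 4) A :=
  fun i j => psi1 z i * star (psi1 z j) + psi2 z i * star (psi2 z j)


/-! The coproduct, counit and antipode are prescribed on generators and exist by the universal
property of `A(SU(2))`; the coaction likewise by that of `A(S^7_{θ'})`: since `λ'` is constant on
the blocks `{z¹, z²}` and `{z³, z⁴}`, the elements `∑ⱼ zʲ ⊗ W_{ji}` (`j` in the block of `i`)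
satisfy the same commutation relations as the `zⁱ`, and `W Wᴴ = 1` gives the sphere relation.
The uniqueness half of the same universal properties shows that both algebras are generated as
*-algebras by their generators, so each Hopf or comodule identity, an equality of algebra maps,
only has to be checked on the entries of `W` and on the `zⁱ, z̄ⁱ`. There it is a matrix identity:
`Δ(W) = W ⊗ W`, `ε(W) = 1` and `S(W) = Wᴴ = W⁻¹`. -/

section Generation
variable {R B C : Type*} [CommSemiring R] [StarRing R] [Semiring B] [Algebra R B] [StarRing B]
  [StarModule R B] [Semiring C] [Algebra R C]

theorem StarAlgebra.adjoin_eq_top_of_retraction {s : Set B}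
    (f : B →⋆ₐ[R] StarAlgebra.adjoin R s)
    (hf : (StarAlgebra.adjoin R s).subtype.comp f = StarAlgHom.id R B) :
    StarAlgebra.adjoin R s = ⊤ :=
  StarSubalgebra.eq_top_iff.mpr fun b => by
    have hb : (f b : B) = b := DFunLike.congr_fun hf b
    exact hb ▸ (f b).2

theorem AlgHom.ext_of_starAlgebra_adjoin_eq_top {s : Set B} (hs : StarAlgebra.adjoin R s = ⊤)
    {f g : B →ₐ[R] C} (h : ∀ x ∈ s, f x = g x ∧ f (star x) = g (star x)) : f = g := by
  refine AlgHom.ext_of_adjoin_eq_top (s := s ∪ star s) ?_ ?_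
  · rw [← StarAlgebra.adjoin_toSubalgebra, hs, StarSubalgebra.top_toSubalgebra]
  · rintro x (hx | hx)
    · exact (h x hx).1
    · simpa using (h _ hx).2

end Generation

theorem Finset.sum_mul_sum_eq_smul_sum_mul_sum {S R ι κ : Type*} [Semiring R] [Monoid S]
    [DistribMulAction S R] (s : Finset ι) (t : Finset κ) (c : S) (a : ι → R) (b : κ → R)
    (h : ∀ i ∈ s, ∀ j ∈ t, a i * b j = c • (b j * a i)) :
    (∑ i ∈ s, a i) * (∑ j ∈ t, b j) = c • ((∑ j ∈ t, b j) * (∑ i ∈ s, a i)) := by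
  simp_rw [Finset.sum_mul_sum, Finset.smul_sum]
  rw [Finset.sum_comm]
  exact Finset.sum_congr rfl fun j hj => Finset.sum_congr rfl fun i hi => h i hi j hj

section MatrixCoaction
open scoped Matrix
variable {R ι B H : Type*} [CommSemiring R] [Fintype ι]

theorem sum_tmul_mul_sum_tmul_eq_smul [Semiring B] [Algebra R B] [CommSemiring H] [Algebra R H]
    (c : R) (x y : ι → B) (m n : ι → H) (h : ∀ j l, x j * y l = c • (y l * x j)) :
    (∑ j, x j ⊗ₜ[R] m j) * (∑ l, y l ⊗ₜ[R] n l) =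
      c • ((∑ l, y l ⊗ₜ[R] n l) * (∑ j, x j ⊗ₜ[R] m j)) := by
  refine Finset.sum_mul_sum_eq_smul_sum_mul_sum _ _ _ _ _ fun j _ l _ => ?_
  rw [Algebra.TensorProduct.tmul_mul_tmul, Algebra.TensorProduct.tmul_mul_tmul, h j l,
    mul_comm, TensorProduct.smul_tmul']

theorem sum_mul_star_of_mul_conjTranspose_eq_one [DecidableEq ι] [StarRing R] [Semiring B]
    [Algebra R B] [StarRing B] [StarModule R B] [Semiring H] [Algebra R H] [StarRing H]
    [StarModule R H] (x : ι → B) {M : Matrix ι ι H} (hM : M * Mᴴ = 1) :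
    ∑ i, (∑ j, x j ⊗ₜ[R] M j i) * star (∑ j, x j ⊗ₜ[R] M j i) =
      (∑ j, x j * star (x j)) ⊗ₜ[R] 1 := by
  have hM' : ∀ j l, ∑ i, M j i * star (M l i) = if j = l then 1 else 0 := fun j l => by
    simpa [Matrix.mul_apply, Matrix.one_apply] using congr_fun₂ hM j l
  simp only [star_sum, TensorProduct.star_tmul, Finset.sum_mul_sum,
    Algebra.TensorProduct.tmul_mul_tmul]
  rw [Finset.sum_comm, TensorProduct.sum_tmul]
  refine Finset.sum_congr rfl fun j _ => ?_
  rw [Finset.sum_comm]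
  simp_rw [← TensorProduct.tmul_sum, hM']
  simp [TensorProduct.tmul_ite]

variable [Semiring B] [Algebra R B] [Semiring H] [Algebra R H]

def IsMatrixCoaction (ρ : B →ₐ[R] B ⊗[R] H) (x : ι → B) (M : Matrix ι ι H) : Prop :=
  ∀ i, ρ (x i) = ∑ j, x j ⊗ₜ[R] M j i

variable {ρ : B →ₐ[R] B ⊗[R] H} {Δ : H →ₐ[R] H ⊗[R] H} {ε : H →ₐ[R] R} {x : ι → B}
  {M : Matrix ι ι H}

theorem IsMatrixCoaction.assoc_map (hρ : IsMatrixCoaction ρ x M)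
    (hΔ : ∀ l, IsMatrixCoaction Δ (M l) M) (i : ι) :
    Algebra.TensorProduct.assoc R R R B H H
        (Algebra.TensorProduct.map ρ (AlgHom.id R H) (ρ (x i))) =
      Algebra.TensorProduct.map (AlgHom.id R B) Δ (ρ (x i)) := by
  have hρ' : ∀ i, ρ (x i) = ∑ j, x j ⊗ₜ[R] M j i := hρ
  have hΔ' : ∀ l i, Δ (M l i) = ∑ j, M l j ⊗ₜ[R] M j i := hΔ
  simp only [hρ', map_sum, Algebra.TensorProduct.map_tmul, AlgHom.id_apply, hΔ',
    TensorProduct.sum_tmul, TensorProduct.tmul_sum, Algebra.TensorProduct.assoc_tmul]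
  exact Finset.sum_comm

variable [DecidableEq ι]

theorem IsMatrixCoaction.rid_map_counit (hρ : IsMatrixCoaction ρ x M) (hε : M.map ε = 1)
    (i : ι) : TensorProduct.rid R B (TensorProduct.map LinearMap.id ε.toLinearMap (ρ (x i))) =
      x i := by
  have hε' : ∀ j i, ε (M j i) = (1 : Matrix ι ι R) j i := fun j i => congr_fun₂ hε j i
  simp [hρ i, hε', Matrix.one_apply]

theorem lid_map_counit_comul (hΔ : ∀ l, IsMatrixCoaction Δ (M l) M) (hε : M.map ε = 1)
    (l i : ι) :
    TensorProduct.lid R H (Algebra.TensorProduct.map ε (AlgHom.id R H) (Δ (M l i))) = M l i := by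
  have hε' : ∀ j i, ε (M j i) = (1 : Matrix ι ι R) j i := fun j i => congr_fun₂ hε j i
  simp [hΔ l i, hε', Matrix.one_apply]

end MatrixCoaction

section MatrixHopf
open scoped Matrix
variable {R ι H : Type*} [CommSemiring R] [Fintype ι] [DecidableEq ι] [CommSemiring H]
  [Algebra R H] [StarRing H] {Δ : H →ₐ[R] H ⊗[R] H} {ε : H →ₐ[R] R} {S : H →ₐ[R] H}
  {M : Matrix ι ι H}

theorem mul'_map_antipode_comul (hM : Mᴴ * M = 1) (hΔ : ∀ l, IsMatrixCoaction Δ (M l) M)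
    (hε : M.map ε = 1) (hS : M.map S = Mᴴ) (l i : ι) :
    LinearMap.mul' R H (TensorProduct.map S.toLinearMap LinearMap.id (Δ (M l i))) =
      algebraMap R H (ε (M l i)) := by
  have hε' : ∀ j i, ε (M j i) = (1 : Matrix ι ι R) j i := fun j i => congr_fun₂ hε j i
  have hS' : ∀ i j, S (M i j) = star (M j i) := fun i j => congr_fun₂ hS i j
  have h := congr_fun₂ hM l i
  simp only [Matrix.mul_apply, Matrix.conjTranspose_apply] at h
  simp [hΔ l i, hε', hS', h, Matrix.one_apply, apply_ite (algebraMap R H)]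

theorem mul'_map_comul_antipode (hM : M * Mᴴ = 1) (hΔ : ∀ l, IsMatrixCoaction Δ (M l) M)
    (hε : M.map ε = 1) (hS : M.map S = Mᴴ) (l i : ι) :
    LinearMap.mul' R H (TensorProduct.map LinearMap.id S.toLinearMap (Δ (M l i))) =
      algebraMap R H (ε (M l i)) := by
  have hε' : ∀ j i, ε (M j i) = (1 : Matrix ι ι R) j i := fun j i => congr_fun₂ hε j i
  have hS' : ∀ i j, S (M i j) = star (M j i) := fun i j => congr_fun₂ hS i j
  have h := congr_fun₂ hM l i
  simp only [Matrix.mul_apply, Matrix.conjTranspose_apply] at h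
  simp [hΔ l i, hε', hS', h, Matrix.one_apply, apply_ite (algebraMap R H)]

end MatrixHopf

section SU2Matrix
open scoped Matrix
variable {H : Type*} [CommRing H] [StarRing H] {w₁ w₂ : H}

def su2Matrix (w₁ w₂ : H) : Matrix (Fin 2) (Fin 2) H := !![w₁, w₂; -star w₂, star w₁]

theorem su2Matrix_mul_conjTranspose (hw : w₁ * star w₁ + w₂ * star w₂ = 1) :
    su2Matrix w₁ w₂ * (su2Matrix w₁ w₂)ᴴ = 1 := by
  ext i j
  fin_cases i <;> fin_cases j <;> simp [su2Matrix, Matrix.mul_apply, Fin.sum_univ_two]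
  all_goals first | ring1 | linear_combination hw

theorem su2Matrix_conjTranspose_mul (hw : w₁ * star w₁ + w₂ * star w₂ = 1) :
    (su2Matrix w₁ w₂)ᴴ * su2Matrix w₁ w₂ = 1 :=
  mul_eq_one_comm.mp (su2Matrix_mul_conjTranspose hw)

end SU2Matrix

/-- `(k, i) ↦ 2k + i`: the `i`-th generator of the `k`-th block; `Δ_R` multiplies each block
`(z_{(k,0)}, z_{(k,1)})` by `W` from the right (`0`-based indices). -/
def blockIndex : Fin 2 × Fin 2 ≃ Fin 4 := finProdFinEquiv

theorem lam7_blockIndex (μ : ℂ) (k i l j : Fin 2) :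
    lam7 μ (blockIndex (k, i)) (blockIndex (l, j)) =
      if k = l then 1 else if k = 0 then μ else μ⁻¹ := by
  fin_cases k <;> fin_cases i <;> fin_cases l <;> fin_cases j <;>
    simp [lam7, blockIndex, finProdFinEquiv]

section Coaction
variable {B H : Type} [Ring B] [Algebra ℂ B] [CommRing H] [Algebra ℂ H] [StarRing H]

def sphereCoaction (z : Fin 4 → B) (w₁ w₂ : H) (n : Fin 4) : B ⊗[ℂ] H :=
  ∑ j, z (blockIndex ((blockIndex.symm n).1, j)) ⊗ₜ[ℂ] su2Matrix w₁ w₂ j (blockIndex.symm n).2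

theorem sphereCoaction_blockIndex (z : Fin 4 → B) (w₁ w₂ : H) (k i : Fin 2) :
    sphereCoaction z w₁ w₂ (blockIndex (k, i)) =
      ∑ j, z (blockIndex (k, j)) ⊗ₜ[ℂ] su2Matrix w₁ w₂ j i := by
  simp [sphereCoaction]

theorem sphereCoaction_eq_vecCons (z : Fin 4 → B) (w₁ w₂ : H) :
    sphereCoaction z w₁ w₂ =
      ![z 0 ⊗ₜ[ℂ] w₁ - z 1 ⊗ₜ[ℂ] star w₂, z 0 ⊗ₜ[ℂ] w₂ + z 1 ⊗ₜ[ℂ] star w₁,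
        z 2 ⊗ₜ[ℂ] w₁ - z 3 ⊗ₜ[ℂ] star w₂, z 2 ⊗ₜ[ℂ] w₂ + z 3 ⊗ₜ[ℂ] star w₁] := by
  ext n
  fin_cases n <;> simp [sphereCoaction, su2Matrix, blockIndex, finProdFinEquiv, Fin.modNat,
    Fin.divNat, Fin.sum_univ_two, sub_eq_add_neg, TensorProduct.tmul_neg]

theorem s7Rel_sphereCoaction [StarRing B] [StarModule ℂ B] [StarModule ℂ H] {μ : ℂ}
    {z : Fin 4 → B} (hz : S7Rel μ z) {w₁ w₂ : H} (hw : w₁ * star w₁ + w₂ * star w₂ = 1) :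
    S7Rel μ (sphereCoaction z w₁ w₂) := by
  obtain ⟨h₁, h₂, h₃, h₄⟩ := hz
  have hv : ∀ k i, star (sphereCoaction z w₁ w₂ (blockIndex (k, i))) =
      ∑ j, star (z (blockIndex (k, j))) ⊗ₜ[ℂ] star (su2Matrix w₁ w₂ j i) := by
    simp [sphereCoaction_blockIndex]
  refine ⟨?_, ?_, ?_, ?_⟩
  · refine blockIndex.forall_congr_right.mp fun ⟨k, i⟩ =>
      blockIndex.forall_congr_right.mp fun ⟨l, j⟩ => ?_
    rw [sphereCoaction_blockIndex, sphereCoaction_blockIndex]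
    exact sum_tmul_mul_sum_tmul_eq_smul _ _ _ _ _ fun a b => by
      rw [h₁, lam7_blockIndex, lam7_blockIndex]
  · refine blockIndex.forall_congr_right.mp fun ⟨k, i⟩ =>
      blockIndex.forall_congr_right.mp fun ⟨l, j⟩ => ?_
    rw [hv, sphereCoaction_blockIndex]
    exact sum_tmul_mul_sum_tmul_eq_smul _ _ _ _ _ fun a b => by
      rw [h₂, lam7_blockIndex, lam7_blockIndex]
  · refine blockIndex.forall_congr_right.mp fun ⟨k, i⟩ =>
      blockIndex.forall_congr_right.mp fun ⟨l, j⟩ => ?_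
    rw [hv, hv]
    exact sum_tmul_mul_sum_tmul_eq_smul _ _ _ _ _ fun a b => by
      rw [h₃, lam7_blockIndex, lam7_blockIndex]
  rw [← blockIndex.sum_comp, Fintype.sum_prod_type]
  simp only [sphereCoaction_blockIndex,
    sum_mul_star_of_mul_conjTranspose_eq_one _ (su2Matrix_mul_conjTranspose hw)]
  rw [← TensorProduct.sum_tmul, ← Fintype.sum_prod_type']
  simp only [Prod.mk.eta]
  rw [blockIndex.sum_comp (fun n => z n * star (z n)), h₄, Algebra.TensorProduct.one_def]

end Coaction

section SU2
open scoped Matrix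
variable {H : Type} [CommRing H] [Algebra ℂ H] [StarRing H] {w₁ w₂ : H}

theorem su2_relation_comul [StarModule ℂ H] (hw : w₁ * star w₁ + w₂ * star w₂ = 1) :
    (w₁ ⊗ₜ[ℂ] w₁ - w₂ ⊗ₜ[ℂ] star w₂) * star (w₁ ⊗ₜ[ℂ] w₁ - w₂ ⊗ₜ[ℂ] star w₂) +
      (w₁ ⊗ₜ[ℂ] w₂ + w₂ ⊗ₜ[ℂ] star w₁) * star (w₁ ⊗ₜ[ℂ] w₂ + w₂ ⊗ₜ[ℂ] star w₁) = 1 := by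
  have h := sum_mul_star_of_mul_conjTranspose_eq_one (R := ℂ) (su2Matrix w₁ w₂ 0)
    (su2Matrix_mul_conjTranspose hw)
  simpa [Fin.sum_univ_two, su2Matrix, hw, sub_eq_add_neg, TensorProduct.tmul_neg,
    Algebra.TensorProduct.one_def] using h

theorem su2_adjoin_eq_top [StarModule ℂ H] (hw : w₁ * star w₁ + w₂ * star w₂ = 1)
    (hHuniv : ∀ (B : Type) [CommRing B] [Algebra ℂ B] [StarRing B] [StarModule ℂ B]
      (v₁ v₂ : B), v₁ * star v₁ + v₂ * star v₂ = 1 →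
      ∃! f : H →⋆ₐ[ℂ] B, f w₁ = v₁ ∧ f w₂ = v₂) :
    StarAlgebra.adjoin ℂ {w₁, w₂} = ⊤ := by
  set S := StarAlgebra.adjoin ℂ ({w₁, w₂} : Set H)
  have h₁ : w₁ ∈ S := StarAlgebra.subset_adjoin ℂ _ (by simp)
  have h₂ : w₂ ∈ S := StarAlgebra.subset_adjoin ℂ _ (by simp)
  obtain ⟨f, hf, -⟩ := hHuniv S ⟨w₁, h₁⟩ ⟨w₂, h₂⟩ (Subtype.ext (by simpa using hw))
  refine StarAlgebra.adjoin_eq_top_of_retraction f ((hHuniv H w₁ w₂ hw).unique ?_ ⟨rfl, rfl⟩)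
  simp [hf.1, hf.2]

theorem su2_algHom_ext [StarModule ℂ H] (hH : StarAlgebra.adjoin ℂ {w₁, w₂} = ⊤) {C : Type*}
    [Ring C] [Algebra ℂ C] {f g : H →ₐ[ℂ] C}
    (h : ∀ i j, f (su2Matrix w₁ w₂ i j) = g (su2Matrix w₁ w₂ i j)) : f = g := by
  refine AlgHom.ext_of_starAlgebra_adjoin_eq_top hH ?_
  rintro x (rfl | rfl)
  · exact ⟨h 0 0, h 1 1⟩
  · refine ⟨h 0 1, neg_injective ?_⟩
    simpa [su2Matrix] using h 1 0

theorem isMatrixCoaction_comul_su2Matrix [StarModule ℂ H] {Δ : H →⋆ₐ[ℂ] H ⊗[ℂ] H}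
    (h₁ : Δ w₁ = w₁ ⊗ₜ[ℂ] w₁ - w₂ ⊗ₜ[ℂ] star w₂) (h₂ : Δ w₂ = w₁ ⊗ₜ[ℂ] w₂ + w₂ ⊗ₜ[ℂ] star w₁)
    (l : Fin 2) : IsMatrixCoaction Δ.toAlgHom (su2Matrix w₁ w₂ l) (su2Matrix w₁ w₂) := by
  intro i
  fin_cases l <;> fin_cases i <;>
    simp [su2Matrix, Fin.sum_univ_two, map_star, h₁, h₂, sub_eq_add_neg, TensorProduct.tmul_neg,
      TensorProduct.neg_tmul, add_comm]

theorem su2Matrix_map_counit {ε : H →⋆ₐ[ℂ] ℂ} (h₁ : ε w₁ = 1) (h₂ : ε w₂ = 0) :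
    (su2Matrix w₁ w₂).map ε = 1 := by
  ext j i
  fin_cases j <;> fin_cases i <;> simp [su2Matrix, map_star, h₁, h₂]

theorem su2Matrix_map_antipode {S : H →⋆ₐ[ℂ] H} (h₁ : S w₁ = star w₁) (h₂ : S w₂ = -w₂) :
    (su2Matrix w₁ w₂).map S = (su2Matrix w₁ w₂)ᴴ := by
  ext i j
  fin_cases i <;> fin_cases j <;> simp [su2Matrix, map_star, h₁, h₂]

variable [StarModule ℂ H] {Δ : H →ₐ[ℂ] H ⊗[ℂ] H} {ε : H →ₐ[ℂ] ℂ} {S : H →ₐ[ℂ] H}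

theorem su2_coassoc (hH : StarAlgebra.adjoin ℂ {w₁, w₂} = ⊤)
    (hΔ : ∀ l, IsMatrixCoaction Δ (su2Matrix w₁ w₂ l) (su2Matrix w₁ w₂)) (h : H) :
    Algebra.TensorProduct.assoc ℂ ℂ ℂ H H H (Algebra.TensorProduct.map Δ (AlgHom.id ℂ H) (Δ h)) =
      Algebra.TensorProduct.map (AlgHom.id ℂ H) Δ (Δ h) := by
  suffices (Algebra.TensorProduct.assoc ℂ ℂ ℂ H H H).toAlgHom.comp
      ((Algebra.TensorProduct.map Δ (AlgHom.id ℂ H)).comp Δ) =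
      (Algebra.TensorProduct.map (AlgHom.id ℂ H) Δ).comp Δ from AlgHom.congr_fun this h
  exact su2_algHom_ext hH fun l i => (hΔ l).assoc_map hΔ i

theorem su2_counit_left (hH : StarAlgebra.adjoin ℂ {w₁, w₂} = ⊤)
    (hΔ : ∀ l, IsMatrixCoaction Δ (su2Matrix w₁ w₂ l) (su2Matrix w₁ w₂))
    (hε : (su2Matrix w₁ w₂).map ε = 1) (h : H) :
    TensorProduct.lid ℂ H (Algebra.TensorProduct.map ε (AlgHom.id ℂ H) (Δ h)) = h := by
  suffices (Algebra.TensorProduct.lid ℂ H).toAlgHom.comp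
      ((Algebra.TensorProduct.map ε (AlgHom.id ℂ H)).comp Δ) = AlgHom.id ℂ H from
    AlgHom.congr_fun this h
  exact su2_algHom_ext hH fun l i => lid_map_counit_comul hΔ hε l i

theorem su2_counit_right (hH : StarAlgebra.adjoin ℂ {w₁, w₂} = ⊤)
    (hΔ : ∀ l, IsMatrixCoaction Δ (su2Matrix w₁ w₂ l) (su2Matrix w₁ w₂))
    (hε : (su2Matrix w₁ w₂).map ε = 1) (h : H) :
    TensorProduct.rid ℂ H (Algebra.TensorProduct.map (AlgHom.id ℂ H) ε (Δ h)) = h := by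
  suffices (Algebra.TensorProduct.rid ℂ ℂ H).toAlgHom.comp
      ((Algebra.TensorProduct.map (AlgHom.id ℂ H) ε).comp Δ) = AlgHom.id ℂ H from
    AlgHom.congr_fun this h
  exact su2_algHom_ext hH fun l i => (hΔ l).rid_map_counit hε i

theorem su2_antipode_left (hw : w₁ * star w₁ + w₂ * star w₂ = 1)
    (hH : StarAlgebra.adjoin ℂ {w₁, w₂} = ⊤)
    (hΔ : ∀ l, IsMatrixCoaction Δ (su2Matrix w₁ w₂ l) (su2Matrix w₁ w₂))
    (hε : (su2Matrix w₁ w₂).map ε = 1) (hS : (su2Matrix w₁ w₂).map S = (su2Matrix w₁ w₂)ᴴ)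
    (h : H) :
    LinearMap.mul' ℂ H (TensorProduct.map S.toLinearMap LinearMap.id (Δ h)) =
      algebraMap ℂ H (ε h) := by
  suffices (Algebra.TensorProduct.lmul' ℂ).comp
      ((Algebra.TensorProduct.map S (AlgHom.id ℂ H)).comp Δ) = (Algebra.ofId ℂ H).comp ε from
    AlgHom.congr_fun this h
  exact su2_algHom_ext hH
    (mul'_map_antipode_comul (su2Matrix_conjTranspose_mul hw) hΔ hε hS)

theorem su2_antipode_right (hw : w₁ * star w₁ + w₂ * star w₂ = 1)
    (hH : StarAlgebra.adjoin ℂ {w₁, w₂} = ⊤)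
    (hΔ : ∀ l, IsMatrixCoaction Δ (su2Matrix w₁ w₂ l) (su2Matrix w₁ w₂))
    (hε : (su2Matrix w₁ w₂).map ε = 1) (hS : (su2Matrix w₁ w₂).map S = (su2Matrix w₁ w₂)ᴴ)
    (h : H) :
    LinearMap.mul' ℂ H (TensorProduct.map LinearMap.id S.toLinearMap (Δ h)) =
      algebraMap ℂ H (ε h) := by
  suffices (Algebra.TensorProduct.lmul' ℂ).comp
      ((Algebra.TensorProduct.map (AlgHom.id ℂ H) S).comp Δ) = (Algebra.ofId ℂ H).comp ε from
    AlgHom.congr_fun this h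
  exact su2_algHom_ext hH
    (mul'_map_comul_antipode (su2Matrix_mul_conjTranspose hw) hΔ hε hS)

end SU2

theorem S7Rel.of_comp {μ : ℂ} {B C : Type} [Ring B] [Algebra ℂ B] [StarRing B] [Ring C]
    [Algebra ℂ C] [StarRing C] [StarModule ℂ C] {f : C →⋆ₐ[ℂ] B} (hf : Function.Injective f)
    {v : Fin 4 → C} (h : S7Rel μ (f ∘ v)) : S7Rel μ v := by
  obtain ⟨h₁, h₂, h₃, h₄⟩ := h
  simp only [Function.comp_apply, ← map_star, ← map_mul, ← map_smul, ← map_sum, ← map_one f,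
    hf.eq_iff] at h₁ h₂ h₃ h₄
  exact ⟨h₁, h₂, h₃, h₄⟩

section Sphere
variable {B H : Type} [Ring B] [Algebra ℂ B] [StarRing B] [StarModule ℂ B] [CommRing H]
  [Algebra ℂ H] [StarRing H] [StarModule ℂ H] {μ : ℂ} {z : Fin 4 → B} {w₁ w₂ : H}

theorem sphere_adjoin_eq_top (hz : S7Rel μ z)
    (hAuniv : ∀ (C : Type) [Ring C] [Algebra ℂ C] [StarRing C] [StarModule ℂ C]
      (v : Fin 4 → C),
      (∀ i j, v i * v j = lam7 μ i j • (v j * v i)) →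
      (∀ i j, star (v i) * v j = lam7 μ j i • (v j * star (v i))) →
      (∀ i j, star (v i) * star (v j) = lam7 μ i j • (star (v j) * star (v i))) →
      (∑ i, v i * star (v i)) = 1 →
      ∃! f : B →⋆ₐ[ℂ] C, ∀ i, f (z i) = v i) :
    StarAlgebra.adjoin ℂ (Set.range z) = ⊤ := by
  set S := StarAlgebra.adjoin ℂ (Set.range z)
  let v : Fin 4 → S := fun i => ⟨z i, StarAlgebra.subset_adjoin ℂ _ ⟨i, rfl⟩⟩
  obtain ⟨h₁, h₂, h₃, h₄⟩ := S7Rel.of_comp (f := S.subtype) Subtype.val_injective (v := v) hz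
  obtain ⟨f, hf, -⟩ := hAuniv S v h₁ h₂ h₃ h₄
  obtain ⟨g₁, g₂, g₃, g₄⟩ := hz
  refine StarAlgebra.adjoin_eq_top_of_retraction f
    ((hAuniv B z g₁ g₂ g₃ g₄).unique (fun i => ?_) fun _ => rfl)
  simp [hf, v]

variable {ΔR : B →⋆ₐ[ℂ] B ⊗[ℂ] H}

theorem isMatrixCoaction_sphereCoaction (hρ : ∀ n, ΔR (z n) = sphereCoaction z w₁ w₂ n)
    (k : Fin 2) :
    IsMatrixCoaction ΔR.toAlgHom (fun i => z (blockIndex (k, i))) (su2Matrix w₁ w₂) :=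
  fun i => (hρ _).trans (sphereCoaction_blockIndex z w₁ w₂ k i)

theorem isMatrixCoaction_star_sphereCoaction (hρ : ∀ n, ΔR (z n) = sphereCoaction z w₁ w₂ n)
    (k : Fin 2) :
    IsMatrixCoaction ΔR.toAlgHom (fun i => star (z (blockIndex (k, i))))
      ((su2Matrix w₁ w₂).map star) := by
  intro i
  simp [hρ, sphereCoaction_blockIndex, map_star]

theorem sphereCoaction_coassoc (hz : StarAlgebra.adjoin ℂ (Set.range z) = ⊤)
    {Δ : H →⋆ₐ[ℂ] H ⊗[ℂ] H} (hρ : ∀ n, ΔR (z n) = sphereCoaction z w₁ w₂ n)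
    (hΔ : ∀ l, IsMatrixCoaction Δ.toAlgHom (su2Matrix w₁ w₂ l) (su2Matrix w₁ w₂)) (a : B) :
    Algebra.TensorProduct.assoc ℂ ℂ ℂ B H H
        (Algebra.TensorProduct.map ΔR.toAlgHom (AlgHom.id ℂ H) (ΔR.toAlgHom a)) =
      Algebra.TensorProduct.map (AlgHom.id ℂ B) Δ.toAlgHom (ΔR.toAlgHom a) := by
  suffices (Algebra.TensorProduct.assoc ℂ ℂ ℂ B H H).toAlgHom.comp
      ((Algebra.TensorProduct.map ΔR.toAlgHom (AlgHom.id ℂ H)).comp ΔR.toAlgHom) =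
      (Algebra.TensorProduct.map (AlgHom.id ℂ B) Δ.toAlgHom).comp ΔR.toAlgHom from
    AlgHom.congr_fun this a
  have hΔ' : ∀ l, IsMatrixCoaction Δ.toAlgHom ((su2Matrix w₁ w₂).map star l)
      ((su2Matrix w₁ w₂).map star) := fun l i => by
    simpa [map_star, star_sum] using congrArg star (hΔ l i)
  refine AlgHom.ext_of_starAlgebra_adjoin_eq_top hz ?_
  rintro _ ⟨n, rfl⟩
  obtain ⟨⟨k, i⟩, rfl⟩ := blockIndex.surjective n
  exact ⟨(isMatrixCoaction_sphereCoaction hρ k).assoc_map hΔ i,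
    (isMatrixCoaction_star_sphereCoaction hρ k).assoc_map hΔ' i⟩

theorem sphereCoaction_counit (hz : StarAlgebra.adjoin ℂ (Set.range z) = ⊤)
    {ε : H →⋆ₐ[ℂ] ℂ} (hρ : ∀ n, ΔR (z n) = sphereCoaction z w₁ w₂ n)
    (hε : (su2Matrix w₁ w₂).map ε = 1) (a : B) :
    TensorProduct.rid ℂ B (TensorProduct.map LinearMap.id ε.toAlgHom.toLinearMap
      (ΔR.toAlgHom a)) = a := by
  suffices (Algebra.TensorProduct.rid ℂ ℂ B).toAlgHom.comp
      ((Algebra.TensorProduct.map (AlgHom.id ℂ B) ε.toAlgHom).comp ΔR.toAlgHom) =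
      AlgHom.id ℂ B from AlgHom.congr_fun this a
  have hε' : ((su2Matrix w₁ w₂).map star).map ε = 1 := by
    rw [Matrix.map_map]
    simpa [Function.comp_def, map_star] using congrArg (·.map star) hε
  refine AlgHom.ext_of_starAlgebra_adjoin_eq_top hz ?_
  rintro _ ⟨n, rfl⟩
  obtain ⟨⟨k, i⟩, rfl⟩ := blockIndex.surjective n
  exact ⟨(isMatrixCoaction_sphereCoaction hρ k).rid_map_counit hε i,
    (isMatrixCoaction_star_sphereCoaction hρ k).rid_map_counit hε' i⟩

end Sphere

/-- Δ(W) = W⊗W, ε(w^1)=1, ε(w^2)=0, S(w^1)=w̄^1, S(w^2)=−w^2 make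
A(SU(2)) into a Hopf algebra, and Δ_R extends to an algebra homomorphism
A(S^7_{θ'}) → A(S^7_{θ'}) ⊗ A(SU(2)) which is a right comodule-algebra structure
(coassociative and counital), compatible with the *-structure on generators. -/
theorem stmt14 (μ : ℂ) (z : Fin 4 → A) (hrel : S7Rel μ z)
    (hAuniv : ∀ (B : Type) [Ring B] [Algebra ℂ B] [StarRing B] [StarModule ℂ B]
      (v : Fin 4 → B),
      (∀ i j, v i * v j = lam7 μ i j • (v j * v i)) →
      (∀ i j, star (v i) * v j = lam7 μ j i • (v j * star (v i))) →
      (∀ i j, star (v i) * star (v j) = lam7 μ i j • (star (v j) * star (v i))) →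
      (∑ i, v i * star (v i)) = 1 →
      ∃! f : A →⋆ₐ[ℂ] B, ∀ i, f (z i) = v i)
    (H : Type) [CommRing H] [Algebra ℂ H] [StarRing H] [StarModule ℂ H]
    (w₁ w₂ : H) (hw : w₁ * star w₁ + w₂ * star w₂ = 1)
    (hHuniv : ∀ (B : Type) [CommRing B] [Algebra ℂ B] [StarRing B] [StarModule ℂ B]
      (v₁ v₂ : B), v₁ * star v₁ + v₂ * star v₂ = 1 →
      ∃! f : H →⋆ₐ[ℂ] B, f w₁ = v₁ ∧ f w₂ = v₂) :
    ∃ (comul : H →ₐ[ℂ] H ⊗[ℂ] H) (counit : H →ₐ[ℂ] ℂ) (antipode : H →ₐ[ℂ] H)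
      (ΔR : A →ₐ[ℂ] A ⊗[ℂ] H),
      -- matrix coproduct Δ(W) = W ⊗ W
      comul w₁ = w₁ ⊗ₜ[ℂ] w₁ - w₂ ⊗ₜ[ℂ] star w₂ ∧
      comul w₂ = w₁ ⊗ₜ[ℂ] w₂ + w₂ ⊗ₜ[ℂ] star w₁ ∧
      counit w₁ = 1 ∧ counit w₂ = 0 ∧
      antipode w₁ = star w₁ ∧ antipode w₂ = -w₂ ∧
      -- coassociativity of Δ
      (∀ h : H, (Algebra.TensorProduct.assoc ℂ ℂ ℂ H H H)
          ((Algebra.TensorProduct.map comul (AlgHom.id ℂ H)) (comul h)) =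
        (Algebra.TensorProduct.map (AlgHom.id ℂ H) comul) (comul h)) ∧
      -- counit laws
      (∀ h : H, (TensorProduct.lid ℂ H)
          ((Algebra.TensorProduct.map counit (AlgHom.id ℂ H)) (comul h)) = h) ∧
      (∀ h : H, (TensorProduct.rid ℂ H)
          ((Algebra.TensorProduct.map (AlgHom.id ℂ H) counit) (comul h)) = h) ∧
      -- antipode laws: m ∘ (S ⊗ id) ∘ Δ = η ∘ ε = m ∘ (id ⊗ S) ∘ Δ
      (∀ h : H, (LinearMap.mul' ℂ H)
          ((TensorProduct.map antipode.toLinearMap LinearMap.id) (comul h)) =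
        algebraMap ℂ H (counit h)) ∧
      (∀ h : H, (LinearMap.mul' ℂ H)
          ((TensorProduct.map LinearMap.id antipode.toLinearMap) (comul h)) =
        algebraMap ℂ H (counit h)) ∧
      -- the coaction on the generators of A(S^7_{θ'}) and their adjoints
      ΔR (z 0) = z 0 ⊗ₜ[ℂ] w₁ - z 1 ⊗ₜ[ℂ] star w₂ ∧
      ΔR (z 1) = z 0 ⊗ₜ[ℂ] w₂ + z 1 ⊗ₜ[ℂ] star w₁ ∧
      ΔR (z 2) = z 2 ⊗ₜ[ℂ] w₁ - z 3 ⊗ₜ[ℂ] star w₂ ∧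
      ΔR (z 3) = z 2 ⊗ₜ[ℂ] w₂ + z 3 ⊗ₜ[ℂ] star w₁ ∧
      ΔR (star (z 0)) = star (z 0) ⊗ₜ[ℂ] star w₁ - star (z 1) ⊗ₜ[ℂ] w₂ ∧
      ΔR (star (z 1)) = star (z 0) ⊗ₜ[ℂ] star w₂ + star (z 1) ⊗ₜ[ℂ] w₁ ∧
      ΔR (star (z 2)) = star (z 2) ⊗ₜ[ℂ] star w₁ - star (z 3) ⊗ₜ[ℂ] w₂ ∧
      ΔR (star (z 3)) = star (z 2) ⊗ₜ[ℂ] star w₂ + star (z 3) ⊗ₜ[ℂ] w₁ ∧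
      -- comodule coassociativity and counitality
      (∀ a : A, (Algebra.TensorProduct.assoc ℂ ℂ ℂ A H H)
          ((Algebra.TensorProduct.map ΔR (AlgHom.id ℂ H)) (ΔR a)) =
        (Algebra.TensorProduct.map (AlgHom.id ℂ A) comul) (ΔR a)) ∧
      (∀ a : A, (TensorProduct.rid ℂ A)
          ((TensorProduct.map LinearMap.id counit.toLinearMap) (ΔR a)) = a) := by
  obtain ⟨h₁, h₂, h₃, h₄⟩ := s7Rel_sphereCoaction hrel hw
  obtain ⟨Δ, ⟨hΔ₁, hΔ₂⟩, -⟩ := hHuniv (H ⊗[ℂ] H) _ _ (su2_relation_comul hw)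
  obtain ⟨ε, ⟨hε₁, hε₂⟩, -⟩ := hHuniv ℂ 1 0 (by simp)
  obtain ⟨S, ⟨hS₁, hS₂⟩, -⟩ := hHuniv H (star w₁) (-w₂) (by simpa [mul_comm] using hw)
  obtain ⟨ΔR, hΔR, -⟩ := hAuniv (A ⊗[ℂ] H) _ h₁ h₂ h₃ h₄
  have hH := su2_adjoin_eq_top hw hHuniv
  have hA := sphere_adjoin_eq_top hrel hAuniv
  have hΔ := isMatrixCoaction_comul_su2Matrix hΔ₁ hΔ₂
  have hε := su2Matrix_map_counit hε₁ hε₂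
  have hS := su2Matrix_map_antipode hS₁ hS₂
  refine ⟨Δ.toAlgHom, ε.toAlgHom, S.toAlgHom, ΔR.toAlgHom, hΔ₁, hΔ₂, hε₁, hε₂, hS₁, hS₂,
    su2_coassoc hH hΔ, su2_counit_left hH hΔ hε, su2_counit_right hH hΔ hε,
    su2_antipode_left hw hH hΔ hε hS, su2_antipode_right hw hH hΔ hε hS,
    ?_, ?_, ?_, ?_, ?_, ?_, ?_, ?_, sphereCoaction_coassoc hA hΔR hΔ,
    sphereCoaction_counit hA hΔR hε⟩
  all_goals simp [hΔR, map_star, sphereCoaction_eq_vecCons]
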